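/- arXiv:1211.6878 — 5 statements merged into one kernel-verified Lean document; each statement's English description precedes it below -/
import Mathlib

section
/- For 0 < q < 1 and m ∈ ℕ, the sequence ψ(k) = 2/(q^k + q^{−k}) satisfies sup_{k ≥ m} |ψ(k+1)/ψ(k) − q| = q^{2m+1}(1 − q²)/(1 + q^{2(m+1)}), and this quantity is strictly less than q^{2m+1}. -/
open Real

private lemma stmt_1_calc (q p : ℝ) (hq0 : 0 < q) (hp : 0 < p) :
    (2 / (q * p + (q * p)⁻¹)) / (2 / (p + p⁻¹)) - q
      = q * p ^ 2 * (1 - q ^ 2) / (1 + (q * p) ^ 2) := by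
  have h1 : 0 < q * p := mul_pos hq0 hp
  have h2 : q * p + (q * p)⁻¹ ≠ 0 := by positivity
  have h3 : p + p⁻¹ ≠ 0 := by positivity
  have h4 : (1 : ℝ) + (q * p) ^ 2 ≠ 0 := by positivity
  field_simp
  ring

/-- For `0 < q < 1` and `m : ℕ`, the sequence `ψ k = 2/(q^k + q^(-k))` satisfies
`sup_{k ≥ m} |ψ(k+1)/ψ(k) − q| = q^(2m+1)(1−q²)/(1+q^(2(m+1)))`, which is `< q^(2m+1)`. -/
theorem stmt_1 (q : ℝ) (hq0 : 0 < q) (hq1 : q < 1) (m : ℕ)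
    (ψ : ℕ → ℝ) (hψ : ∀ k : ℕ, ψ k = 2 / (q ^ k + q ^ (-(k : ℤ)))) :
    (⨆ k : {k : ℕ // m ≤ k}, |ψ ((k : ℕ) + 1) / ψ (k : ℕ) - q|)
        = q ^ (2 * m + 1) * (1 - q ^ 2) / (1 + q ^ (2 * (m + 1))) ∧
    q ^ (2 * m + 1) * (1 - q ^ 2) / (1 + q ^ (2 * (m + 1))) < q ^ (2 * m + 1) := by
  set f : ℕ → ℝ := fun k => q ^ (2 * k + 1) * (1 - q ^ 2) / (1 + q ^ (2 * (k + 1)))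
    with hf
  have hq2 : 0 < 1 - q ^ 2 := by nlinarith
  have heq : ∀ k : ℕ, |ψ (k + 1) / ψ k - q| = f k := by
    intro k
    have hpk : 0 < q ^ k := pow_pos hq0 k
    have hval : ψ (k + 1) / ψ k - q = f k := by
      rw [hψ, hψ]
      have h1 : q ^ (k + 1) = q * q ^ k := by ring
      have h2 : q ^ (-((k : ℕ) + 1 : ℕ) : ℤ) = (q * q ^ k)⁻¹ := by
        rw [zpow_neg, zpow_natCast]; ring_nf
      have h3 : q ^ (-(k : ℤ)) = (q ^ k)⁻¹ := by rw [zpow_neg, zpow_natCast]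
      rw [h1, h2, h3, stmt_1_calc q (q ^ k) hq0 hpk, hf]
      have h4 : q ^ (2 * k + 1) = q * (q ^ k) ^ 2 := by ring
      have h5 : q ^ (2 * (k + 1)) = (q * q ^ k) ^ 2 := by ring
      dsimp only
      rw [h4, h5]
    rw [hval, abs_of_nonneg]
    rw [hf]
    positivity
  have hfpos : ∀ k : ℕ, 0 < f k := by
    intro k; rw [hf]; dsimp only; positivity
  have hmono : ∀ k : ℕ, m ≤ k → f k ≤ f m := by
    intro k hk
    rw [hf]; dsimp only
    rw [div_le_div_iff₀ (by positivity) (by positivity)]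
    have hpow : q ^ (2 * k + 1) ≤ q ^ (2 * m + 1) :=
      pow_le_pow_of_le_one hq0.le hq1.le (by omega)
    have hA : q ^ (2 * k + 1) * q ^ (2 * (m + 1)) ≤ q ^ (2 * m + 1) * q ^ (2 * (k + 1)) := by
      rw [← pow_add, ← pow_add]
      apply pow_le_pow_of_le_one hq0.le hq1.le; omega
    nlinarith [pow_pos hq0 (2 * (m + 1)), pow_pos hq0 (2 * (k + 1))]
  constructor
  · apply le_antisymm
    · apply ciSup_le
      intro k
      rw [heq]
      exact hmono k k.2
    · have hbdd : BddAbove (Set.range fun k : {k : ℕ // m ≤ k} =>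
          |ψ ((k : ℕ) + 1) / ψ (k : ℕ) - q|) := by
        refine ⟨f m, ?_⟩
        rintro x ⟨k, rfl⟩
        dsimp only
        rw [heq]
        exact hmono k k.2
      have := le_ciSup hbdd (⟨m, le_refl m⟩ : {k : ℕ // m ≤ k})
      rwa [heq] at this
  · rw [div_lt_iff₀ (by positivity)]
    nlinarith [pow_pos hq0 (2 * (m + 1)), pow_pos hq0 (2 * m + 1)]
end

section
/- Let 0 < q < 1 and let l ≥ 2 be a natural number. Define ψ_l(k) = q^k (1 + Σ_{j=1}^{l−1} ((1−q²)^j/(j! 2^j)) Π_{ν=0}^{j−1} (k+2ν)). Then for every m ≥ 1, sup_{k ≥ m} |ψ_l(k+1)/ψ_l(k) − q| ≤ (2l−3)q/m. -/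
/-!
Write `ψ_l(k) = q^k (1 + S(k))`, where `S` is a combination with nonnegative coefficients of
`P_j(x) = x(x+2)⋯(x+2j-2)`, `1 ≤ j ≤ l-1`, so that
`ψ_l(k+1)/ψ_l(k) - q = q (S(k+1) - S(k)) / (1 + S(k))`.
Cancelling the common factors `x` and `x+2j-1` and comparing the rest pairwise shows
`x P_j(x+1) ≤ (x+2j-1) P_j(x)`, hence `k (S(k+1) - S(k)) ≤ (2l-3) S(k)`, and the bound follows
from `k ≥ m`.
-/

open Real Finset

lemma prod_add_two_mul_nonneg {x : ℝ} (hx : 0 ≤ x) (j : ℕ) :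
    0 ≤ ∏ ν ∈ range j, (x + 2 * ν) :=
  prod_nonneg fun _ _ => by positivity

lemma prod_add_two_mul_mono {x y : ℝ} (hx : 0 ≤ x) (hxy : x ≤ y) (j : ℕ) :
    ∏ ν ∈ range j, (x + 2 * ν) ≤ ∏ ν ∈ range j, (y + 2 * ν) :=
  prod_le_prod (fun _ _ => by positivity) fun _ _ => by linarith

lemma mul_prod_add_one_le {x : ℝ} (hx : 0 ≤ x) {j : ℕ} (hj : j ≠ 0) :
    x * ∏ ν ∈ range j, (x + 1 + 2 * ν) ≤
      (x + 2 * j - 1) * ∏ ν ∈ range j, (x + 2 * ν) := by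
  obtain ⟨i, rfl⟩ := Nat.exists_eq_succ_of_ne_zero hj
  have hshift : ∏ ν ∈ range i, (x + 2 * ((ν + 1 : ℕ) : ℝ)) =
      ∏ ν ∈ range i, (x + 2 + 2 * ν) :=
    prod_congr rfl fun ν _ => by push_cast; ring
  rw [prod_range_succ, prod_range_succ', hshift]
  have hmono := prod_add_two_mul_mono (by linarith : 0 ≤ x + 1) (by linarith : x + 1 ≤ x + 2) i
  have hpos : 0 ≤ x * (x + 1 + 2 * i) := by positivity
  push_cast
  nlinarith [mul_le_mul_of_nonneg_left hmono hpos]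

lemma mul_sum_prod_add_one_le {c : ℕ → ℝ} (hc : ∀ j, 0 ≤ c j) {x : ℝ} (hx : 0 ≤ x)
    (L : ℕ) :
    x * ∑ j ∈ Icc 1 L, c j * ∏ ν ∈ range j, (x + 1 + 2 * ν) ≤
      (x + 2 * L - 1) * ∑ j ∈ Icc 1 L, c j * ∏ ν ∈ range j, (x + 2 * ν) := by
  rw [mul_sum, mul_sum]
  refine sum_le_sum fun j hj => ?_
  obtain ⟨hj1, hjL⟩ := mem_Icc.mp hj
  have hjL' : (j : ℝ) ≤ L := by exact_mod_cast hjL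
  have hP := prod_add_two_mul_nonneg hx j
  calc x * (c j * ∏ ν ∈ range j, (x + 1 + 2 * ν))
      = c j * (x * ∏ ν ∈ range j, (x + 1 + 2 * ν)) := by ring
    _ ≤ c j * ((x + 2 * j - 1) * ∏ ν ∈ range j, (x + 2 * ν)) :=
      mul_le_mul_of_nonneg_left (mul_prod_add_one_le hx (by omega)) (hc j)
    _ ≤ c j * ((x + 2 * L - 1) * ∏ ν ∈ range j, (x + 2 * ν)) := by gcongr; exact hc j
    _ = (x + 2 * L - 1) * (c j * ∏ ν ∈ range j, (x + 2 * ν)) := by ring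

lemma sum_mul_prod_nonneg {c : ℕ → ℝ} (hc : ∀ j, 0 ≤ c j) {x : ℝ} (hx : 0 ≤ x)
    (s : Finset ℕ) :
    0 ≤ ∑ j ∈ s, c j * ∏ ν ∈ range j, (x + 2 * ν) :=
  sum_nonneg fun j _ => mul_nonneg (hc j) (prod_add_two_mul_nonneg hx j)

lemma sum_mul_prod_mono {c : ℕ → ℝ} (hc : ∀ j, 0 ≤ c j) {x : ℝ} (hx : 0 ≤ x)
    (s : Finset ℕ) :
    ∑ j ∈ s, c j * ∏ ν ∈ range j, (x + 2 * ν) ≤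
      ∑ j ∈ s, c j * ∏ ν ∈ range j, (x + 1 + 2 * ν) :=
  sum_le_sum fun j _ =>
    mul_le_mul_of_nonneg_left (prod_add_two_mul_mono hx (by linarith) j) (hc j)

lemma abs_pow_succ_mul_div_pow_mul_sub_le {q a b C x y : ℝ} (k : ℕ) (hq : 0 < q) (ha : 0 < a)
    (hab : a ≤ b) (hx : 0 < x) (hxy : x ≤ y) (h : y * (b - a) ≤ C * a) :
    |q ^ (k + 1) * b / (q ^ k * a) - q| ≤ C * q / x := by
  have hratio : q ^ (k + 1) * b / (q ^ k * a) - q = q * (b - a) / a := by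
    rw [pow_succ]; field_simp
  rw [hratio, abs_of_nonneg (by have := sub_nonneg.mpr hab; positivity),
    div_le_div_iff₀ ha hx]
  nlinarith [mul_le_mul_of_nonneg_right hxy (sub_nonneg.mpr hab)]

/-- For `0 < q < 1`, `l ≥ 2` and `m ≥ 1`, the coefficients `ψ_l(k)` of the polyharmonic
Poisson kernel satisfy `sup_{k ≥ m} |ψ_l(k+1)/ψ_l(k) − q| ≤ (2l−3)q/m`. -/
theorem stmt_2 (q : ℝ) (hq0 : 0 < q) (hq1 : q < 1) (l : ℕ) (hl : 2 ≤ l)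
    (ψ : ℕ → ℝ)
    (hψ : ∀ k : ℕ, ψ k = q ^ k *
      (1 + ∑ j ∈ Finset.Icc 1 (l - 1),
        ((1 - q ^ 2) ^ j / ((j.factorial : ℝ) * 2 ^ j)) *
          ∏ ν ∈ Finset.range j, ((k : ℝ) + 2 * ν)))
    (m : ℕ) (hm : 1 ≤ m) :
    (⨆ k : {k : ℕ // m ≤ k}, |ψ ((k : ℕ) + 1) / ψ (k : ℕ) - q|)
      ≤ ((2 * l - 3 : ℕ) : ℝ) * q / (m : ℝ) := by
  set c : ℕ → ℝ := fun j => (1 - q ^ 2) ^ j / ((j.factorial : ℝ) * 2 ^ j)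
  have hc : ∀ j, 0 ≤ c j := fun j => div_nonneg (pow_nonneg (by nlinarith) j) (by positivity)
  set S : ℝ → ℝ := fun x => ∑ j ∈ Icc 1 (l - 1), c j * ∏ ν ∈ range j, (x + 2 * ν)
  have hψS : ∀ k : ℕ, ψ k = q ^ k * (1 + S k) := hψ
  have hC : ((2 * l - 3 : ℕ) : ℝ) = 2 * ((l - 1 : ℕ) : ℝ) - 1 := by
    rw [Nat.cast_sub (by omega), Nat.cast_sub (by omega)]; push_cast; ring
  have hC0 : (0 : ℝ) ≤ 2 * ((l - 1 : ℕ) : ℝ) - 1 := by rw [← hC]; positivity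
  have : Nonempty {k : ℕ // m ≤ k} := ⟨⟨m, le_rfl⟩⟩
  refine ciSup_le ?_
  rintro ⟨k, hk⟩
  have hS0 : 0 ≤ S k := sum_mul_prod_nonneg hc k.cast_nonneg _
  have hgrowth : (k : ℝ) * S (k + 1) ≤ (k + 2 * ((l - 1 : ℕ) : ℝ) - 1) * S k :=
    mul_sum_prod_add_one_le hc k.cast_nonneg (l - 1)
  rw [hψS, hψS, Nat.cast_succ, hC]
  refine abs_pow_succ_mul_div_pow_mul_sub_le k hq0 (by positivity)
    (add_le_add le_rfl (sum_mul_prod_mono hc k.cast_nonneg _))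
    (by exact_mod_cast hm : (0 : ℝ) < m) (by exact_mod_cast hk : (m : ℝ) ≤ k) ?_
  linarith
end

section
/- Let 0 < q < 1, β ∈ ℝ, n, p ∈ ℕ with 1 ≤ p ≤ n, and t ∈ ℝ. Then Σ_{k=n−p}^{n−1} Σ_{j=k+1}^∞ q^j cos(jt − βπ/2) = Z_q(t) · Σ_{k=n−p+1}^{n} q^k cos(kt + θ_q(t) − βπ/2), where Z_q(t) = 1/√(1 − 2q cos t + q²) and θ_q(t) = arctan(q sin t/(1 − q cos t)). -/
/-!
With `z = q e^{it}`, the inner tail series is the real part of the geometric series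
`e^{-iα} ∑_{j ≥ m} z^j = e^{-iα} z^m / (1 - z)`, where `α = βπ/2`. Since `1 - z` has
positive real part `1 - q cos t` and imaginary part `-q sin t`, its polar form is
`√(1 - 2q cos t + q²) e^{-iθ_q(t)}`, so `1 / (1 - z) = Z_q(t) e^{iθ_q(t)}` and the tail equals
`Z_q(t) q^m cos(mt + θ_q(t) - α)`. Summing over `m = k + 1` for `k ∈ [n - p, n)` gives the claim.
-/

open Real

open Complex in
lemma Complex.ofReal_add_ofReal_mul_I_eq_sqrt_mul_exp_arctan {x : ℝ} (hx : 0 < x) (y : ℝ) :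
    (x + y * I : ℂ) = (√(x ^ 2 + y ^ 2) : ℝ) * exp ((Real.arctan (y / x) : ℝ) * I) := by
  have hsqrt : √(x ^ 2 + y ^ 2) = x * √(1 + (y / x) ^ 2) := by
    rw [← Real.sqrt_sq hx.le, ← Real.sqrt_mul (sq_nonneg x), Real.sqrt_sq hx.le]
    congr 1
    field_simp
  have hpos : 0 < √(1 + (y / x) ^ 2) := by positivity
  have hcos : √(x ^ 2 + y ^ 2) * Real.cos (Real.arctan (y / x)) = x := by
    rw [Real.cos_arctan, hsqrt]
    field_simp
  have hsin : √(x ^ 2 + y ^ 2) * Real.sin (Real.arctan (y / x)) = y := by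
    rw [Real.sin_arctan, hsqrt]
    field_simp
  rw [exp_ofReal_mul_I, mul_add, ← mul_assoc, ← ofReal_mul, ← ofReal_mul, hcos, hsin]

lemma Complex.re_exp_neg_mul_I_mul_pow (q t α : ℝ) (k : ℕ) :
    (Complex.exp (-(α : ℂ) * Complex.I) * ((q : ℂ) * Complex.exp (t * Complex.I)) ^ k).re
      = q ^ k * Real.cos (k * t - α) := by
  rw [mul_pow, ← Complex.exp_nat_mul, mul_left_comm, ← Complex.exp_add, ← Complex.ofReal_pow,
    Complex.re_ofReal_mul]
  convert congrArg (q ^ k * ·) (Complex.exp_ofReal_mul_I_re (k * t - α)) using 4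
  push_cast
  ring

lemma Complex.inv_one_sub_mul_exp_mul_I {q : ℝ} (hq : |q| < 1) (t : ℝ) :
    (1 - q * Complex.exp (t * Complex.I))⁻¹
      = (1 / √(1 - 2 * q * Real.cos t + q ^ 2) : ℝ) *
        Complex.exp ((Real.arctan (q * Real.sin t / (1 - q * Real.cos t)) : ℝ) * Complex.I) := by
  have hre : 0 < 1 - q * Real.cos t := by
    have : |q * Real.cos t| < 1 := by
      rw [abs_mul]
      nlinarith [abs_cos_le_one t, abs_nonneg (Real.cos t), abs_nonneg q]
    linarith [le_abs_self (q * Real.cos t)]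
  have hpolar := Complex.ofReal_add_ofReal_mul_I_eq_sqrt_mul_exp_arctan hre (-(q * Real.sin t))
  have hnormSq :
      (1 - q * Real.cos t) ^ 2 + (-(q * Real.sin t)) ^ 2 = 1 - 2 * q * Real.cos t + q ^ 2 := by
    nlinarith [Real.sin_sq_add_cos_sq t]
  rw [hnormSq, neg_div, Real.arctan_neg] at hpolar
  have hcart : 1 - q * Complex.exp (t * Complex.I)
      = ((1 - q * Real.cos t : ℝ) + (-(q * Real.sin t) : ℝ) * Complex.I : ℂ) := by
    rw [Complex.exp_ofReal_mul_I]
    push_cast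
    ring
  rw [hcart, hpolar, mul_inv, ← Complex.exp_neg, Complex.ofReal_neg, neg_mul, neg_neg, one_div,
    Complex.ofReal_inv]

lemma tsum_pow_add_mul_cos_mul_sub {q : ℝ} (hq : |q| < 1) (t α : ℝ) (m : ℕ) :
    ∑' j : ℕ, q ^ (m + j) * cos (((m + j : ℕ) : ℝ) * t - α)
      = (1 / √(1 - 2 * q * cos t + q ^ 2)) *
        (q ^ m * cos (m * t + arctan (q * sin t / (1 - q * cos t)) - α)) := by
  set z : ℂ := q * Complex.exp (t * Complex.I)
  have hz : ‖z‖ < 1 := by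
    rwa [norm_mul, Complex.norm_exp_ofReal_mul_I, mul_one, Complex.norm_real, Real.norm_eq_abs]
  have hgeom : HasSum (fun j : ℕ ↦ Complex.exp (-(α : ℂ) * Complex.I) * z ^ (m + j))
      (Complex.exp (-(α : ℂ) * Complex.I) * z ^ m * (1 - z)⁻¹) := by
    simp_rw [pow_add, ← mul_assoc]
    exact (hasSum_geometric_of_norm_lt_one hz).mul_left _
  have htsum := (Complex.hasSum_re hgeom).tsum_eq
  simp only [z, Complex.re_exp_neg_mul_I_mul_pow] at htsum
  have hrot : Complex.exp (-(α : ℂ) * Complex.I) * z ^ m * (1 - z)⁻¹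
      = (1 / √(1 - 2 * q * cos t + q ^ 2) : ℝ) *
        (Complex.exp (-((α - arctan (q * sin t / (1 - q * cos t)) : ℝ) : ℂ) * Complex.I) *
          z ^ m) := by
    rw [Complex.inv_one_sub_mul_exp_mul_I hq, Complex.ofReal_sub, neg_sub, sub_mul,
      Complex.exp_sub, neg_mul, Complex.exp_neg]
    ring
  rw [htsum, hrot, Complex.re_ofReal_mul, Complex.re_exp_neg_mul_I_mul_pow, sub_sub_eq_add_sub]

theorem stmt_7_general (q β t : ℝ) (hq0 : 0 < q) (hq1 : q < 1)
    (n p : ℕ) :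
    ∑ k ∈ Finset.Ico (n - p) n,
        ∑' j : ℕ, q ^ (k + 1 + j) * Real.cos (((k + 1 + j : ℕ) : ℝ) * t - β * π / 2)
      = (1 / Real.sqrt (1 - 2 * q * Real.cos t + q ^ 2)) *
        ∑ k ∈ Finset.Icc (n - p + 1) n, q ^ k * Real.cos ((k : ℝ) * t +
          Real.arctan (q * Real.sin t / (1 - q * Real.cos t)) - β * π / 2) := by
  have hq : |q| < 1 := abs_lt.mpr ⟨by linarith, hq1⟩
  simp_rw [tsum_pow_add_mul_cos_mul_sub hq, ← Finset.mul_sum]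
  rw [Finset.sum_Ico_add' (fun k : ℕ ↦ q ^ k * cos (k * t +
      arctan (q * sin t / (1 - q * cos t)) - β * π / 2)), Finset.Ico_add_one_right_eq_Icc]

/-- For `0 < q < 1`, `β, t ∈ ℝ`, `1 ≤ p ≤ n`:
`Σ_{k=n−p}^{n−1} Σ_{j=k+1}^∞ q^j cos(jt − βπ/2)
  = Z_q(t) Σ_{k=n−p+1}^{n} q^k cos(kt + θ_q(t) − βπ/2)`. -/
theorem stmt_7 (q β t : ℝ) (hq0 : 0 < q) (hq1 : q < 1)
    (n p : ℕ) (hp : 1 ≤ p) (hpn : p ≤ n) :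
    ∑ k ∈ Finset.Ico (n - p) n,
        ∑' j : ℕ, q ^ (k + 1 + j) * Real.cos (((k + 1 + j : ℕ) : ℝ) * t - β * π / 2)
      = (1 / Real.sqrt (1 - 2 * q * Real.cos t + q ^ 2)) *
        ∑ k ∈ Finset.Icc (n - p + 1) n, q ^ k * Real.cos ((k : ℝ) * t +
          Real.arctan (q * Real.sin t / (1 - q * Real.cos t)) - β * π / 2) :=
  stmt_7_general q β t hq0 hq1 n p
end

section
/- Let 0 < q < 1, β ∈ ℝ, n, p ∈ ℕ with 1 ≤ p ≤ n. Then the L²(−π,π) norm of the function g(t) = Σ_{k=n−p}^{n−1} Σ_{j=k+1}^∞ q^j cos(jt − βπ/2) equals √π · q^{n−p+1} · √((1 + q² − q^{2p}(2p + 1 − q²(2p−1)))/(1 − q²)³). -/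
/-!
Swapping the finite and the infinite sum, the frequency `n - p + 1 + i` occurs for exactly
`min (i + 1) p` values of `k`, so `g(t) = ∑ᵢ cᵢ cos((n - p + 1 + i) t - βπ/2)` with
`cᵢ = min (i + 1) p · q^(n - p + 1 + i)`. Cosines with distinct positive integer frequencies and
a common phase are orthogonal on `(-π, π)` with squared norm `π`, and the series converges
absolutely, so `∫ g² = π ∑ cᵢ²`. The last sum is a polynomial-times-geometric sum for `i < p`
plus a geometric tail, which gives the closed form.
-/

open Real Finset MeasureTheory intervalIntegral

theorem tsum_ite_le_eq_tsum_add {α : Type*} [AddCommMonoid α] [TopologicalSpace α]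
    (a : ℕ → α) (l : ℕ) : ∑' i, (if l ≤ i then a i else 0) = ∑' j, a (l + j) := by
  rw [← (add_right_injective l).tsum_eq]
  · exact tsum_congr fun j => if_pos (Nat.le_add_right l j)
  · intro i hi
    exact ⟨i - l, Nat.add_sub_cancel' (not_not.1 fun h => hi (if_neg h))⟩

theorem sum_range_tsum_add_eq_tsum_min_mul {a : ℕ → ℝ} (ha : Summable a) (p : ℕ) :
    ∑ l ∈ range p, ∑' j, a (l + j) = ∑' i, ((min (i + 1) p : ℕ) : ℝ) * a i := by
  have hcount : ∀ i, ((min (i + 1) p : ℕ) : ℝ) * a i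
      = ∑ l ∈ range p, if l ≤ i then a i else 0 := by
    intro i
    rw [sum_ite, sum_const_zero, add_zero, sum_const, nsmul_eq_mul,
      show (range p).filter (· ≤ i) = range (min (i + 1) p) by ext; simp; omega, card_range]
  have hsummable : ∀ l, Summable fun i => if l ≤ i then a i else 0 := fun l =>
    ha.norm.of_norm_bounded fun i => by split_ifs <;> simp
  simp_rw [hcount, ← tsum_ite_le_eq_tsum_add]
  exact (Summable.tsum_finsetSum fun l _ => hsummable l).symm

theorem summable_pow_add {q : ℝ} (hq0 : 0 ≤ q) (hq1 : q < 1) (m : ℕ) :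
    Summable fun i => q ^ (m + i) :=
  (summable_geometric_of_lt_one hq0 hq1).comp_injective (add_right_injective m)

theorem summable_min_succ_mul_pow {q : ℝ} (hq0 : 0 ≤ q) (hq1 : q < 1) (p m : ℕ) :
    Summable fun i => ((min (i + 1) p : ℕ) : ℝ) * q ^ (m + i) :=
  ((summable_pow_add hq0 hq1 m).mul_left (p : ℝ)).of_nonneg_of_le (fun i => by positivity)
    fun i => by
      gcongr
      exact_mod_cast min_le_right _ _

theorem sum_Ico_tsum_pow_mul_cos_eq_tsum {q : ℝ} (hq0 : 0 ≤ q) (hq1 : q < 1) {n p : ℕ}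
    (hpn : p ≤ n) (φ t : ℝ) :
    ∑ k ∈ Ico (n - p) n, ∑' j, q ^ (k + 1 + j) * cos (((k + 1 + j : ℕ) : ℝ) * t - φ)
      = ∑' i, ((min (i + 1) p : ℕ) * q ^ (n - p + 1 + i))
          * cos (((n - p + 1 + i : ℕ) : ℝ) * t - φ) := by
  set a : ℕ → ℝ := fun i => q ^ (n - p + 1 + i) * cos (((n - p + 1 + i : ℕ) : ℝ) * t - φ)
  have ha : Summable a := (summable_pow_add hq0 hq1 _).of_norm_bounded fun i => by
    simp only [a, norm_mul, norm_pow, norm_eq_abs, abs_of_nonneg hq0]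
    exact mul_le_of_le_one_right (by positivity) (abs_cos_le_one _)
  calc _ = ∑ l ∈ range p, ∑' j, a (l + j) := by
        rw [sum_Ico_eq_sum_range, Nat.sub_sub_self hpn]
        refine sum_congr rfl fun l _ => tsum_congr fun j => ?_
        rw [show n - p + l + 1 + j = n - p + 1 + (l + j) by omega]
    _ = ∑' i, ((min (i + 1) p : ℕ) : ℝ) * a i := sum_range_tsum_add_eq_tsum_min_mul ha p
    _ = _ := by simp_rw [a, mul_assoc]

theorem sum_range_succ_sq_mul_pow_mul_one_sub_pow_three (r : ℝ) (p : ℕ) :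
    (∑ i ∈ range p, ((i : ℝ) + 1) ^ 2 * r ^ i) * (1 - r) ^ 3
      = 1 + r - r ^ p * (((p : ℝ) + 1) ^ 2 - r * (2 * p ^ 2 + 2 * p - 1) + r ^ 2 * p ^ 2) := by
  induction p with
  | zero => norm_num
  | succ p ih =>
    rw [sum_range_succ, add_mul, ih]
    push_cast
    ring

theorem tsum_min_succ_sq_mul_pow {r : ℝ} (hr0 : 0 ≤ r) (hr1 : r < 1) (p : ℕ) :
    ∑' i, ((min (i + 1) p : ℕ) : ℝ) ^ 2 * r ^ i
      = (1 + r - r ^ p * (2 * p + 1 - r * (2 * p - 1))) / (1 - r) ^ 3 := by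
  have hsummable : Summable fun i => ((min (i + 1) p : ℕ) : ℝ) ^ 2 * r ^ i := by
    refine ((summable_geometric_of_lt_one hr0 hr1).mul_left ((p : ℝ) ^ 2)).of_nonneg_of_le
      (fun i => by positivity) fun i => ?_
    gcongr
    exact_mod_cast min_le_right _ _
  have hhead : ∑ i ∈ range p, ((min (i + 1) p : ℕ) : ℝ) ^ 2 * r ^ i
      = ∑ i ∈ range p, ((i : ℝ) + 1) ^ 2 * r ^ i := by
    refine sum_congr rfl fun i hi => ?_
    rw [min_eq_left (mem_range.1 hi), Nat.cast_succ]
  have htail : ∑' i, ((min (i + p + 1) p : ℕ) : ℝ) ^ 2 * r ^ (i + p)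
      = p ^ 2 * r ^ p * (1 - r)⁻¹ := by
    simp_rw [show ∀ i, min (i + p + 1) p = p by omega, pow_add, mul_comm _ (r ^ p),
      ← mul_assoc, tsum_mul_left, tsum_geometric_of_lt_one hr0 hr1]
    ring
  have hr : (1 : ℝ) - r ≠ 0 := by linarith
  rw [← hsummable.sum_add_tsum_nat_add p, hhead, htail, eq_div_iff (pow_ne_zero 3 hr), add_mul,
    sum_range_succ_sq_mul_pow_mul_one_sub_pow_three]
  field_simp
  ring

theorem tsum_sq_min_succ_mul_pow {q : ℝ} (hq0 : 0 ≤ q) (hq1 : q < 1) (p m : ℕ) :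
    ∑' i, (((min (i + 1) p : ℕ) : ℝ) * q ^ (m + i)) ^ 2
      = (q ^ m) ^ 2 * ((1 + q ^ 2 - q ^ (2 * p) * (2 * p + 1 - q ^ 2 * (2 * p - 1)))
          / (1 - q ^ 2) ^ 3) := by
  rw [pow_mul, ← tsum_min_succ_sq_mul_pow (sq_nonneg q) (pow_lt_one₀ hq0 hq1 two_ne_zero),
    ← tsum_mul_left]
  exact tsum_congr fun i => by ring

theorem integral_cos_int_mul_add_eq_zero {k : ℤ} (hk : k ≠ 0) (d : ℝ) :
    ∫ t in (-π)..π, cos (k * t + d) = 0 := by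
  rw [integral_comp_mul_add cos (Int.cast_ne_zero.2 hk), integral_cos]
  simp [sin_add, mul_neg, sin_int_mul_pi]

theorem integral_cos_nat_mul_sub_mul_cos_nat_mul_sub (φ : ℝ) {a b : ℕ} (hab : a + b ≠ 0) :
    ∫ t in (-π)..π, cos (a * t - φ) * cos (b * t - φ) = if a = b then π else 0 := by
  have hprod : ∀ t : ℝ, cos (a * t - φ) * cos (b * t - φ)
      = (cos (((a - b : ℤ) : ℝ) * t + 0) + cos (((a + b : ℤ) : ℝ) * t + -(2 * φ))) / 2 := by
    intro t
    rw [eq_div_iff two_ne_zero, mul_comm, ← mul_assoc, two_mul_cos_mul_cos]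
    push_cast
    ring_nf
  have hsum : ∫ t in (-π)..π, cos (((a + b : ℤ) : ℝ) * t + -(2 * φ)) = 0 :=
    integral_cos_int_mul_add_eq_zero (by omega) _
  simp_rw [hprod]
  rw [intervalIntegral.integral_div,
    intervalIntegral.integral_add ((by fun_prop : Continuous _).intervalIntegrable _ _)
      ((by fun_prop : Continuous _).intervalIntegrable _ _), hsum, add_zero]
  split_ifs with h
  · subst h
    simp
  · rw [integral_cos_int_mul_add_eq_zero (by omega), zero_div]

theorem hasSum_integral_mul_of_norm_le {ι : Type*} [Countable ι] {C : ι → ℝ} (hC : Summable C)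
    {u : ι → ℝ → ℝ} (hu_cont : ∀ i, Continuous (u i)) (hu_le : ∀ i t, ‖u i t‖ ≤ C i) (a b : ℝ) :
    HasSum (fun z : ι × ι => ∫ t in a..b, u z.1 t * u z.2 t) (∫ t in a..b, (∑' i, u i t) ^ 2) := by
  have hC_nonneg : ∀ i, 0 ≤ C i := fun i => (norm_nonneg _).trans (hu_le i 0)
  have hu_norm : ∀ t, Summable fun i => ‖u i t‖ := fun t =>
    hC.of_nonneg_of_le (fun _ => norm_nonneg _) (hu_le · t)
  have hsq : ∀ t, HasSum (fun z : ι × ι => u z.1 t * u z.2 t) ((∑' i, u i t) ^ 2) := by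
    intro t
    have hsum : Summable fun i => u i t := (hu_norm t).of_norm
    rw [sq]
    exact hsum.hasSum.mul hsum.hasSum (summable_mul_of_summable_norm (hu_norm t) (hu_norm t))
  refine hasSum_integral_of_dominated_convergence (fun z _ => C z.1 * C z.2)
    (fun z => ((hu_cont z.1).mul (hu_cont z.2)).aestronglyMeasurable)
    (fun z => ae_of_all _ fun t _ => ?_)
    (ae_of_all _ fun _ _ => hC.mul_of_nonneg hC hC_nonneg hC_nonneg)
    intervalIntegrable_const (ae_of_all _ fun t _ => hsq t)
  exact (norm_mul _ _).trans_le <| mul_le_mul (hu_le z.1 t) (hu_le z.2 t) (norm_nonneg _)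
    (hC_nonneg _)

theorem integral_sq_tsum_mul_cos {c : ℕ → ℝ} (hc : Summable c) {k : ℕ → ℕ}
    (hk : Function.Injective k) (hk0 : ∀ i, k i ≠ 0) (φ : ℝ) :
    ∫ t in (-π)..π, (∑' i, c i * cos (k i * t - φ)) ^ 2 = π * ∑' i, c i ^ 2 := by
  have hint := hasSum_integral_mul_of_norm_le hc.norm (u := fun i t => c i * cos (k i * t - φ))
    (fun i => by fun_prop) (fun i t => by
      simpa [norm_mul] using mul_le_of_le_one_right (norm_nonneg (c i)) (abs_cos_le_one _))
    (-π) π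
  have hdiag : ∀ z : ℕ × ℕ,
      ∫ t in (-π)..π, c z.1 * cos (k z.1 * t - φ) * (c z.2 * cos (k z.2 * t - φ))
        = if z.1 = z.2 then π * c z.1 ^ 2 else 0 := by
    rintro ⟨i, j⟩
    have horth := integral_cos_nat_mul_sub_mul_cos_nat_mul_sub φ (a := k i) (b := k j)
      (by have := hk0 i; omega)
    simp only [hk.eq_iff] at horth
    simp only [mul_mul_mul_comm (c i), intervalIntegral.integral_const_mul, horth]
    split_ifs with h
    · subst h; ring
    · rw [mul_zero]
  simp_rw [hdiag] at hint
  have hoff : ∀ z ∉ Set.range fun i : ℕ => (i, i),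
      (if z.1 = z.2 then π * c z.1 ^ 2 else 0) = 0 := by
    rintro ⟨i, j⟩ hij
    exact if_neg fun h => hij ⟨i, Prod.ext rfl h⟩
  have hinj : Function.Injective fun i : ℕ => (i, i) := fun _ _ h => congrArg Prod.fst h
  simpa [tsum_mul_left] using ((hinj.hasSum_iff hoff).2 hint).tsum_eq.symm

theorem stmt_8_general (q β : ℝ) (hq0 : 0 < q) (hq1 : q < 1)
    (n p : ℕ) (hpn : p ≤ n)
    (g : ℝ → ℝ)
    (hg : ∀ t : ℝ, g t = ∑ k ∈ Finset.Ico (n - p) n,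
      ∑' j : ℕ, q ^ (k + 1 + j) * Real.cos (((k + 1 + j : ℕ) : ℝ) * t - β * π / 2)) :
    Real.sqrt (∫ t in (-π)..π, (g t) ^ 2)
      = Real.sqrt π * q ^ (n - p + 1) *
        Real.sqrt ((1 + q ^ 2 - q ^ (2 * p) *
          (2 * (p : ℝ) + 1 - q ^ 2 * (2 * (p : ℝ) - 1))) / (1 - q ^ 2) ^ 3) := by
  have hg_series : g = fun t => ∑' i, ((min (i + 1) p : ℕ) * q ^ (n - p + 1 + i))
      * cos (((n - p + 1 + i : ℕ) : ℝ) * t - β * π / 2) :=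
    funext fun t => (hg t).trans (sum_Ico_tsum_pow_mul_cos_eq_tsum hq0.le hq1 hpn _ t)
  rw [hg_series, integral_sq_tsum_mul_cos (summable_min_succ_mul_pow hq0.le hq1 p _)
    (add_right_injective _) (fun i => by omega), tsum_sq_min_succ_mul_pow hq0.le hq1,
    sqrt_mul pi_pos.le, sqrt_mul (sq_nonneg _), sqrt_sq (by positivity), mul_assoc]

/-- For `0 < q < 1`, `β ∈ ℝ`, `1 ≤ p ≤ n`, the `L²(−π,π)` norm of
`g(t) = Σ_{k=n−p}^{n−1} Σ_{j=k+1}^∞ q^j cos(jt − βπ/2)` equals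
`√π · q^(n−p+1) · √((1 + q² − q^(2p)(2p + 1 − q²(2p−1)))/(1 − q²)³)`. -/
theorem stmt_8 (q β : ℝ) (hq0 : 0 < q) (hq1 : q < 1)
    (n p : ℕ) (hp : 1 ≤ p) (hpn : p ≤ n)
    (g : ℝ → ℝ)
    (hg : ∀ t : ℝ, g t = ∑ k ∈ Finset.Ico (n - p) n,
      ∑' j : ℕ, q ^ (k + 1 + j) * Real.cos (((k + 1 + j : ℕ) : ℝ) * t - β * π / 2)) :
    Real.sqrt (∫ t in (-π)..π, (g t) ^ 2)
      = Real.sqrt π * q ^ (n - p + 1) *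
        Real.sqrt ((1 + q ^ 2 - q ^ (2 * p) *
          (2 * (p : ℝ) + 1 - q ^ 2 * (2 * (p : ℝ) - 1))) / (1 - q ^ 2) ^ 3) :=
  stmt_8_general q β hq0 hq1 n p hpn g hg
end

section
/- Let α > 0, r > 1, n, p, j ∈ ℕ with p ≤ n, and let τ_{n,p}(k) = 1 − (n−k)/p for n−p+1 ≤ k ≤ n−1, τ_{n,p}(k) = 1 for k ≥ n. Then there is an absolute constant C such that Σ_{k=n−p+j}^∞ e^{−αk^r} τ_{n,p}(k) ≤ C · j^{σ(p)−1} · (1 + 1/(α r (n−p+j)^{r−1}))^{σ(p)} · e^{−α(n−p+j)^r}, where σ(p) = 1 if p ≤ j and σ(p) = 2 if p > j. -/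
open Real

/-- The de la Vallée Poussin multipliers `τ_{n,p}(k)`. -/
noncomputable def tauVP (n p k : ℕ) : ℝ :=
  if n ≤ k then 1 else 1 - ((n : ℝ) - (k : ℝ)) / (p : ℝ)

/-- There is an absolute constant `C` such that for all `α > 0`, `r > 1`,
`1 ≤ p ≤ n`, `1 ≤ j`:
`Σ_{k=n−p+j}^∞ e^{−αk^r} τ_{n,p}(k)
  ≤ C j^{σ(p)−1} (1 + 1/(α r (n−p+j)^{r−1}))^{σ(p)} e^{−α(n−p+j)^r}`,
where `σ(p) = 1` if `p ≤ j` and `σ(p) = 2` if `p > j`. -/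
theorem stmt_18 :
    ∃ C : ℝ, 0 < C ∧ ∀ (α r : ℝ) (n p j : ℕ), 0 < α → 1 < r →
      1 ≤ p → p ≤ n → 1 ≤ j →
      (∑' i : ℕ, Real.exp (-(α * ((n - p + j + i : ℕ) : ℝ) ^ r)) * tauVP n p (n - p + j + i))
        ≤ C * (j : ℝ) ^ ((if p ≤ j then 1 else 2) - 1) *
          (1 + 1 / (α * r * ((n - p + j : ℕ) : ℝ) ^ (r - 1))) ^ (if p ≤ j then 1 else 2) *
          Real.exp (-(α * ((n - p + j : ℕ) : ℝ) ^ r)) := by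
  refine ⟨1, one_pos, ?_⟩
  intro α r n p j hα hr hp hpn hj
  set m : ℕ := n - p + j with hm
  have hm1 : 1 ≤ m := le_trans hj (Nat.le_add_left j (n - p))
  have hM1 : (1 : ℝ) ≤ (m : ℝ) := by exact_mod_cast hm1
  have hM0 : (0 : ℝ) < (m : ℝ) := lt_of_lt_of_le one_pos hM1
  set β : ℝ := α * r * (m : ℝ) ^ (r - 1) with hβ
  have hr0 : (0 : ℝ) < r := lt_trans one_pos hr
  have hβ0 : 0 < β := mul_pos (mul_pos hα hr0) (Real.rpow_pos_of_pos hM0 _)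
  have hratio0 : (0 : ℝ) ≤ Real.exp (-β) := (Real.exp_pos _).le
  have hratio1 : Real.exp (-β) < 1 := by
    rw [Real.exp_lt_one_iff]; linarith
  -- termwise bound
  have hterm : ∀ i : ℕ,
      Real.exp (-(α * ((m + i : ℕ) : ℝ) ^ r)) * tauVP n p (m + i)
        ≤ Real.exp (-(α * (m : ℝ) ^ r)) * Real.exp (-β) ^ i := by
    intro i
    have hcast : ((m + i : ℕ) : ℝ) = (m : ℝ) + i := by push_cast; ring
    have htau1 : tauVP n p (m + i) ≤ 1 := by
      unfold tauVP
      split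
      · exact le_rfl
      · have : (0 : ℝ) ≤ ((n : ℝ) - ((m + i : ℕ) : ℝ)) / (p : ℝ) := by
          apply div_nonneg _ (by positivity)
          have hlt : m + i < n := by omega
          have : ((m + i : ℕ) : ℝ) ≤ (n : ℝ) := by exact_mod_cast hlt.le
          linarith
        linarith
    have htau0 : 0 ≤ tauVP n p (m + i) := by
      unfold tauVP
      split
      · exact zero_le_one
      · have hlt : m + i < n := by omega
        have hnk : (n : ℝ) - ((m + i : ℕ) : ℝ) ≤ (p : ℝ) := by
          have : (n : ℝ) - ((m + i : ℕ) : ℝ) = (p : ℝ) - j - i := by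
            rw [hcast, hm]
            push_cast [Nat.cast_sub hpn]
            ring
          rw [this]
          have hj' : (1 : ℝ) ≤ (j : ℝ) := by exact_mod_cast hj
          have hi' : (0 : ℝ) ≤ (i : ℝ) := Nat.cast_nonneg i
          linarith
        have hp0 : (0 : ℝ) < (p : ℝ) := by exact_mod_cast hp
        have : ((n : ℝ) - ((m + i : ℕ) : ℝ)) / (p : ℝ) ≤ 1 := by
          rw [div_le_one hp0]; exact hnk
        linarith
    -- exponent bound: α m^r + β i ≤ α (m+i)^r
    have hi0 : (0 : ℝ) ≤ (i : ℝ) := Nat.cast_nonneg i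
    have hexp : α * (m : ℝ) ^ r + β * i ≤ α * ((m : ℝ) + i) ^ r := by
      have hfrac : (0 : ℝ) ≤ (i : ℝ) / (m : ℝ) := div_nonneg hi0 hM0.le
      have hbern : 1 + r * ((i : ℝ) / (m : ℝ)) ≤ (1 + (i : ℝ) / (m : ℝ)) ^ r :=
        one_add_mul_self_le_rpow_one_add (by linarith) hr.le
      have hsplit : ((m : ℝ) + i) ^ r = (m : ℝ) ^ r * (1 + (i : ℝ) / (m : ℝ)) ^ r := by
        rw [← Real.mul_rpow hM0.le (by linarith)]
        congr 1
        field_simp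
      have hMr : (0 : ℝ) < (m : ℝ) ^ r := Real.rpow_pos_of_pos hM0 _
      have hkey : (m : ℝ) ^ r * (1 + r * ((i : ℝ) / (m : ℝ)))
          ≤ ((m : ℝ) + i) ^ r := by
        rw [hsplit]
        exact mul_le_mul_of_nonneg_left hbern hMr.le
      have hpow : (m : ℝ) ^ r / (m : ℝ) = (m : ℝ) ^ (r - 1) := by
        rw [Real.rpow_sub hM0, Real.rpow_one]
      have : (m : ℝ) ^ r * (1 + r * ((i : ℝ) / (m : ℝ)))
          = (m : ℝ) ^ r + r * (m : ℝ) ^ (r - 1) * i := by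
        rw [← hpow]; field_simp
      rw [this] at hkey
      calc α * (m : ℝ) ^ r + β * i
          = α * ((m : ℝ) ^ r + r * (m : ℝ) ^ (r - 1) * i) := by rw [hβ]; ring
        _ ≤ α * ((m : ℝ) + i) ^ r := by
            exact mul_le_mul_of_nonneg_left hkey hα.le
    calc Real.exp (-(α * ((m + i : ℕ) : ℝ) ^ r)) * tauVP n p (m + i)
        ≤ Real.exp (-(α * ((m + i : ℕ) : ℝ) ^ r)) * 1 :=
          mul_le_mul_of_nonneg_left htau1 (Real.exp_pos _).le
      _ = Real.exp (-(α * (((m : ℝ) + i) ^ r))) := by rw [mul_one, hcast]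
      _ ≤ Real.exp (-(α * (m : ℝ) ^ r + β * i)) := by
          apply Real.exp_le_exp.mpr; linarith
      _ = Real.exp (-(α * (m : ℝ) ^ r)) * Real.exp (-β) ^ i := by
          rw [← Real.exp_nat_mul, ← Real.exp_add]; ring_nf
  have hgs : Summable (fun i : ℕ => Real.exp (-(α * (m : ℝ) ^ r)) * Real.exp (-β) ^ i) :=
    (summable_geometric_of_lt_one hratio0 hratio1).mul_left _
  have hnonneg : ∀ i : ℕ, 0 ≤ Real.exp (-(α * ((m + i : ℕ) : ℝ) ^ r)) * tauVP n p (m + i) := by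
    intro i
    apply mul_nonneg (Real.exp_pos _).le
    have := hterm i
    unfold tauVP
    split
    · exact zero_le_one
    · have hlt : m + i < n := by omega
      have hnk : (n : ℝ) - ((m + i : ℕ) : ℝ) ≤ (p : ℝ) := by
        have hcast : ((m + i : ℕ) : ℝ) = (m : ℝ) + i := by push_cast; ring
        have heq : (n : ℝ) - ((m + i : ℕ) : ℝ) = (p : ℝ) - j - i := by
          rw [hcast, hm]; push_cast [Nat.cast_sub hpn]; ring
        rw [heq]
        have hj' : (1 : ℝ) ≤ (j : ℝ) := by exact_mod_cast hj
        have hi' : (0 : ℝ) ≤ (i : ℝ) := Nat.cast_nonneg i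
        linarith
      have hp0 : (0 : ℝ) < (p : ℝ) := by exact_mod_cast hp
      have : ((n : ℝ) - ((m + i : ℕ) : ℝ)) / (p : ℝ) ≤ 1 := by
        rw [div_le_one hp0]; exact hnk
      linarith
  have hsummable : Summable (fun i : ℕ =>
      Real.exp (-(α * ((m + i : ℕ) : ℝ) ^ r)) * tauVP n p (m + i)) :=
    Summable.of_nonneg_of_le hnonneg hterm hgs
  have hsum : (∑' i : ℕ, Real.exp (-(α * ((m + i : ℕ) : ℝ) ^ r)) * tauVP n p (m + i))
      ≤ Real.exp (-(α * (m : ℝ) ^ r)) * (1 - Real.exp (-β))⁻¹ := by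
    calc (∑' i : ℕ, Real.exp (-(α * ((m + i : ℕ) : ℝ) ^ r)) * tauVP n p (m + i))
        ≤ ∑' i : ℕ, Real.exp (-(α * (m : ℝ) ^ r)) * Real.exp (-β) ^ i :=
          Summable.tsum_le_tsum hterm hsummable hgs
      _ = Real.exp (-(α * (m : ℝ) ^ r)) * (1 - Real.exp (-β))⁻¹ := by
          rw [tsum_mul_left, tsum_geometric_of_lt_one hratio0 hratio1]
  -- (1 - e^{-β})⁻¹ ≤ 1 + 1/β
  have hinv : (1 - Real.exp (-β))⁻¹ ≤ 1 + 1 / β := by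
    have h1 : 0 < 1 - Real.exp (-β) := by linarith
    have hbe : β + 1 ≤ Real.exp β := Real.add_one_le_exp β
    have hepos : (0 : ℝ) < Real.exp β := Real.exp_pos β
    have key : (β + 1) * Real.exp (-β) ≤ 1 := by
      rw [Real.exp_neg β, mul_inv_le_iff₀ hepos, one_mul]
      exact hbe
    have hexpand : (1 + 1 / β) * (1 - Real.exp (-β)) * β
        = β + 1 - (β + 1) * Real.exp (-β) := by
      field_simp
    have h2 : (1 : ℝ) * β ≤ (1 + 1 / β) * (1 - Real.exp (-β)) * β := by
      rw [hexpand, one_mul]; linarith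
    have h3 : (1 : ℝ) ≤ (1 + 1 / β) * (1 - Real.exp (-β)) :=
      le_of_mul_le_mul_right h2 hβ0
    rw [inv_le_iff_one_le_mul₀ h1]
    linarith [h3]
  have hA : (1 : ℝ) ≤ 1 + 1 / β := by
    have : 0 < 1 / β := by positivity
    linarith
  have hEpos : 0 < Real.exp (-(α * (m : ℝ) ^ r)) := Real.exp_pos _
  have hmain : (∑' i : ℕ, Real.exp (-(α * ((m + i : ℕ) : ℝ) ^ r)) * tauVP n p (m + i))
      ≤ Real.exp (-(α * (m : ℝ) ^ r)) * (1 + 1 / β) := by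
    calc (∑' i : ℕ, Real.exp (-(α * ((m + i : ℕ) : ℝ) ^ r)) * tauVP n p (m + i))
        ≤ Real.exp (-(α * (m : ℝ) ^ r)) * (1 - Real.exp (-β))⁻¹ := hsum
      _ ≤ Real.exp (-(α * (m : ℝ) ^ r)) * (1 + 1 / β) :=
          mul_le_mul_of_nonneg_left hinv hEpos.le
  have hj' : (1 : ℝ) ≤ (j : ℝ) := by exact_mod_cast hj
  by_cases hpj : p ≤ j
  · simp only [hpj, if_true]
    calc (∑' i : ℕ, Real.exp (-(α * ((m + i : ℕ) : ℝ) ^ r)) * tauVP n p (m + i))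
        ≤ Real.exp (-(α * (m : ℝ) ^ r)) * (1 + 1 / β) := hmain
      _ = 1 * (j : ℝ) ^ (1 - 1) * (1 + 1 / β) ^ 1 * Real.exp (-(α * (m : ℝ) ^ r)) := by
          ring
  · simp only [hpj, if_false]
    calc (∑' i : ℕ, Real.exp (-(α * ((m + i : ℕ) : ℝ) ^ r)) * tauVP n p (m + i))
        ≤ Real.exp (-(α * (m : ℝ) ^ r)) * (1 + 1 / β) := hmain
      _ ≤ 1 * (j : ℝ) ^ (2 - 1) * (1 + 1 / β) ^ 2 * Real.exp (-(α * (m : ℝ) ^ r)) := by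
          have hA2 : (1 + 1 / β) ≤ (1 + 1 / β) ^ 2 := by nlinarith
          have : (1 + 1 / β) ^ 2 ≤ (j : ℝ) ^ (2 - 1) * (1 + 1 / β) ^ 2 := by
            have hpow : ((j : ℝ) ^ (2 - 1) : ℝ) = (j : ℝ) := by norm_num
            rw [hpow]
            nlinarith
          nlinarith [hEpos.le]
end
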